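/- Correctness of the aggregate verification: with shared base A = H_1(t) ∈ G, secret keys (x_i, y_i), public keys X̃_i = G̃^{x_i}, Ỹ_i = G̃^{y_i}, hashed messages m'_i ∈ Z_p, and aggregate B' = ∏_{i=1}^ℓ A^{x_i + m'_i·y_i}, we have e(A, ∏_{i=1}^ℓ X̃_i · Ỹ_i^{m'_i}) = e(B', G̃). -/

import Mathlib

/-- Exponentiation of a group element by a scalar in `ZMod p`. -/
def zmp {G : Type*} [Monoid G] {p : ℕ} (a : G) (s : ZMod p) : G := a ^ s.val

/-!
Since `A` and `G₀` have order dividing `p`, `zmp` turns sums and products of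
`ZMod p`-scalars into products and iterated powers. Hence `∏ i, X̃ᵢ · Ỹᵢ^{m'ᵢ} = G₀^s`
and `B' = A^s` for the single scalar `s = ∑ i, (xᵢ + m'ᵢ yᵢ)`, and bilinearity moves `s`
across the pairing: `e(A, G₀^s) = e(A^s, G₀)`.
-/

section Monoid

variable {M : Type*} [Monoid M] {p : ℕ}

lemma zmp_one (hp : p ≠ 1) (a : M) : zmp a (1 : ZMod p) = a := by
  rw [zmp, ZMod.val_one'' hp, pow_one]

lemma zmp_natCast {a : M} (ha : a ^ p = 1) (n : ℕ) : zmp a (n : ZMod p) = a ^ n := by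
  rw [zmp, ZMod.val_natCast, ← pow_eq_pow_mod n ha]

variable [NeZero p]

lemma zmp_add {a : M} (ha : a ^ p = 1) (s t : ZMod p) :
    zmp a (s + t) = zmp a s * zmp a t := by
  rw [← ZMod.natCast_zmod_val s, ← ZMod.natCast_zmod_val t, ← Nat.cast_add,
    zmp_natCast ha, zmp_natCast ha, zmp_natCast ha, pow_add]

lemma zmp_zmp {a : M} (ha : a ^ p = 1) (s t : ZMod p) :
    zmp (zmp a s) t = zmp a (s * t) := by
  rw [← ZMod.natCast_zmod_val s, ← ZMod.natCast_zmod_val t, ← Nat.cast_mul,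
    zmp_natCast ha, zmp_natCast ha, zmp_natCast (by rw [pow_right_comm, ha, one_pow]), pow_mul]

end Monoid

lemma prod_zmp {M ι : Type*} [CommMonoid M] {p : ℕ} [NeZero p] {a : M} (ha : a ^ p = 1)
    (s : Finset ι) (c : ι → ZMod p) :
    ∏ i ∈ s, zmp a (c i) = zmp a (∑ i ∈ s, c i) := by
  have hsum : ∑ i ∈ s, c i = ((∑ i ∈ s, (c i).val : ℕ) : ZMod p) := by
    push_cast [ZMod.natCast_zmod_val]; rfl
  rw [hsum, zmp_natCast ha, ← Finset.prod_pow_eq_pow_sum]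
  rfl

lemma pairing_zmp_right {G Gt GT : Type*} [Monoid G] [Monoid Gt] [Monoid GT] {p : ℕ}
    (hp : p ≠ 1) {e : G → Gt → GT}
    (he : ∀ (X : G) (Y : Gt) (a b : ZMod p), e (zmp X a) (zmp Y b) = zmp (e X Y) (a * b))
    (X : G) (Y : Gt) (s : ZMod p) :
    e X (zmp Y s) = e (zmp X s) Y := by
  conv_lhs => rw [← zmp_one hp X]
  conv_rhs => rw [← zmp_one hp Y]
  rw [he, he, mul_comm]

theorem stmt_3_general {p : ℕ} (hp : p.Prime)
    {G Gt GT : Type*} [CommGroup G] [CommGroup Gt] [CommGroup GT]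
    [Fintype G] [Fintype Gt]
    (hG : Fintype.card G = p) (hGt : Fintype.card Gt = p)
    (e : G → Gt → GT)
    (he : ∀ (X : G) (Y : Gt) (a b : ZMod p), e (zmp X a) (zmp Y b) = zmp (e X Y) (a * b))
    (G₀ : Gt) (A : G) (ℓ : ℕ)
    (x y m' : Fin ℓ → ZMod p) (Xt Yt : Fin ℓ → Gt)
    (hX : ∀ i, Xt i = zmp G₀ (x i)) (hY : ∀ i, Yt i = zmp G₀ (y i))
    (B' : G) (hB' : B' = ∏ i, zmp A (x i + m' i * y i)) :
    e A (∏ i, Xt i * zmp (Yt i) (m' i)) = e B' G₀ := by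
  have : NeZero p := ⟨hp.ne_zero⟩
  have hA : A ^ p = 1 := hG ▸ pow_card_eq_one
  have hG₀ : G₀ ^ p = 1 := hGt ▸ pow_card_eq_one
  have hpk_prod : ∏ i, Xt i * zmp (Yt i) (m' i) = zmp G₀ (∑ i, (x i + m' i * y i)) := by
    rw [← prod_zmp hG₀]
    refine Finset.prod_congr rfl fun i _ => ?_
    rw [hX, hY, zmp_zmp hG₀, zmp_add hG₀, mul_comm (y i)]
  rw [hpk_prod, pairing_zmp_right hp.ne_one he, hB', prod_zmp hA]

theorem stmt_3 {p : ℕ} (hp : p.Prime)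
    {G Gt GT : Type*} [CommGroup G] [CommGroup Gt] [CommGroup GT]
    [Fintype G] [Fintype Gt] [Fintype GT]
    (hG : Fintype.card G = p) (hGt : Fintype.card Gt = p) (hGT : Fintype.card GT = p)
    (e : G → Gt → GT)
    (he : ∀ (X : G) (Y : Gt) (a b : ZMod p), e (zmp X a) (zmp Y b) = zmp (e X Y) (a * b))
    (G₀ : Gt) (A : G) (ℓ : ℕ)
    (x y m' : Fin ℓ → ZMod p) (Xt Yt : Fin ℓ → Gt)
    (hX : ∀ i, Xt i = zmp G₀ (x i)) (hY : ∀ i, Yt i = zmp G₀ (y i))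
    (B' : G) (hB' : B' = ∏ i, zmp A (x i + m' i * y i)) :
    e A (∏ i, Xt i * zmp (Yt i) (m' i)) = e B' G₀ :=
  stmt_3_general hp hG hGt e he G₀ A ℓ x y m' Xt Yt hX hY B' hB'
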